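/- arXiv:1304.5921 — 8 statements merged into one kernel-verified Lean document; each statement's English description precedes it below -/
import Mathlib

section
/- If S is a dichotomous operator, then S decomposes with respect to its spectral subspaces V = V₊ ⊕ V₋: every x ∈ D(S) can be written as x = x₊ + x₋ with x₊ ∈ D(S) ∩ V₊ and x₋ ∈ D(S) ∩ V₋. -/
/-- `Rz` is a (bounded, everywhere defined) resolvent operator for `S` at `z`. -/
def HasRes {V : Type*} [NormedAddCommGroup V] [NormedSpace ℂ V]
    (S : V →ₗ.[ℂ] V) (z : ℂ) (Rz : V →L[ℂ] V) : Prop :=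
  (∀ y : V, ∃ h : Rz y ∈ S.domain, S ⟨Rz y, h⟩ - z • Rz y = y) ∧
  (∀ x : S.domain, Rz (S x - z • (x : V)) = (x : V))

/-- `Rz` is a resolvent operator at `z` for the restriction of `S` to the invariant
subspace `W`. -/
def HasResOn {V : Type*} [NormedAddCommGroup V] [NormedSpace ℂ V]
    (S : V →ₗ.[ℂ] V) (W : Submodule ℂ V) (z : ℂ) (Rz : ↥W →L[ℂ] ↥W) : Prop :=
  (∀ y : W, ∃ h : ((Rz y : V) ∈ S.domain), S ⟨(Rz y : V), h⟩ - z • (Rz y : V) = (y : V)) ∧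
  (∀ x : S.domain, ((x : V) ∈ W) →
    ∃ h : S x - z • (x : V) ∈ W, ((Rz ⟨S x - z • (x : V), h⟩ : V) = (x : V)))

/-- a dichotomous operator decomposes with respect to its spectral
subspaces `V = V₊ ⊕ V₋`. -/
theorem dichotomous_decomposes
    {V : Type*} [NormedAddCommGroup V] [NormedSpace ℂ V]
    (S : V →ₗ.[ℂ] V) (hdense : Dense (S.domain : Set V))
    (h : ℝ) (hh : 0 < h)
    (Vp Vm : Submodule ℂ V) (hVp : IsClosed (Vp : Set V)) (hVm : IsClosed (Vm : Set V))
    (hcompl : IsCompl Vp Vm)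
    -- (i) the strip {z : |Re z| < h} is contained in ρ(S)
    (hstrip : ∀ z : ℂ, |z.re| < h → ∃ Rz : V →L[ℂ] V, HasRes S z Rz)
    -- (ii) V₊ and V₋ are S-invariant
    (hinvp : ∀ x : S.domain, (x : V) ∈ Vp → S x ∈ Vp)
    (hinvm : ∀ x : S.domain, (x : V) ∈ Vm → S x ∈ Vm)
    -- (iii) σ(S|V₊) ⊆ ℂ₊ and σ(S|V₋) ⊆ ℂ₋
    (hspecp : ∀ z : ℂ, z.re ≤ 0 → ∃ Rz : ↥Vp →L[ℂ] ↥Vp, HasResOn S Vp z Rz)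
    (hspecm : ∀ z : ℂ, 0 ≤ z.re → ∃ Rz : ↥Vm →L[ℂ] ↥Vm, HasResOn S Vm z Rz) :
    ∀ x : V, x ∈ S.domain →
      ∃ xp ∈ S.domain ⊓ Vp, ∃ xm ∈ S.domain ⊓ Vm, x = xp + xm := by
  intro x hx
  obtain ⟨R0, hR0⟩ := hstrip 0 (by simpa using hh)
  obtain ⟨Rp, hRp⟩ := hspecp 0 le_rfl
  obtain ⟨Rm, hRm⟩ := hspecm 0 le_rfl
  set y : V := S ⟨x, hx⟩ with hy
  have hsup : Vp ⊔ Vm = ⊤ := hcompl.sup_eq_top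
  have hymem : y ∈ Vp ⊔ Vm := hsup ▸ Submodule.mem_top
  obtain ⟨yp, hyp, ym, hym, hyeq⟩ := Submodule.mem_sup.mp hymem
  obtain ⟨hxp_dom, hxp_eq⟩ := hRp.1 ⟨yp, hyp⟩
  obtain ⟨hxm_dom, hxm_eq⟩ := hRm.1 ⟨ym, hym⟩
  set xp : V := (Rp ⟨yp, hyp⟩ : V)
  set xm : V := (Rm ⟨ym, hym⟩ : V)
  have hSxp : S ⟨xp, hxp_dom⟩ = yp := by simpa using hxp_eq
  have hSxm : S ⟨xm, hxm_dom⟩ = ym := by simpa using hxm_eq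
  have hsum_dom : xp + xm ∈ S.domain := S.domain.add_mem hxp_dom hxm_dom
  have hSsum : S ⟨xp + xm, hsum_dom⟩ = y := by
    have : (⟨xp + xm, hsum_dom⟩ : S.domain) = ⟨xp, hxp_dom⟩ + ⟨xm, hxm_dom⟩ := rfl
    rw [this, S.map_add, hSxp, hSxm, hyeq]
  have h1 : R0 y = x := by
    have := hR0.2 ⟨x, hx⟩
    simpa [hy] using this
  have h2 : R0 y = xp + xm := by
    have := hR0.2 ⟨xp + xm, hsum_dom⟩
    simpa [hSsum] using this
  refine ⟨xp, ⟨hxp_dom, (Rp ⟨yp, hyp⟩).2⟩, xm, ⟨hxm_dom, (Rm ⟨ym, hym⟩).2⟩, ?_⟩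
  rw [← h1, h2]
end

section
/- Let S be a closed densely defined operator on a Hilbert space H that decomposes with respect to a (not necessarily orthogonal) direct sum H = H₁ ⊕ H₂. Then the adjoint S* decomposes with respect to H = H₂⊥ ⊕ H₁⊥, and σ(S*|H₂⊥) = σ(S|H₁)* (complex conjugation) and σ(S*|H₁⊥) = σ(S|H₂)*. -/
/-!
Let `P` be the bounded projection onto `H₁` along `H₂`. The operator `S` decomposes with respect
to `H₁ ⊕ H₂` exactly when `P S ⊆ S P`. Taking adjoints gives `P* S* ⊆ S* P*`, and `P*` is the
projection onto `H₂ᗮ` along `H₁ᗮ`, so `S*` decomposes with respect to `H₂ᗮ ⊕ H₁ᗮ`.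

A resolvent `R` of `S|H₁` at `z` extends to `T = R P` on all of `H`, and it satisfies
`(S - z) T = P` and `T (S - z) ⊆ P`. Both relations pass to adjoints: `(S* - z̄) T* = P*` and
`T* (S* - z̄) ⊆ P*`, so `T*` restricts to a resolvent of `S*|H₂ᗮ` at `z̄`. For the converse, apply
the same argument to `S*`, using `S** = S` for closed `S`.
-/

open scoped InnerProductSpace ComplexConjugate

namespace Submodule

variable {𝕜 E F : Type*} [RCLike 𝕜] [NormedAddCommGroup E] [InnerProductSpace 𝕜 E]
  [NormedAddCommGroup F] [InnerProductSpace 𝕜 F] [CompleteSpace E] [CompleteSpace F]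

theorem adjoint_adjoint {g : Submodule 𝕜 (E × F)} (hg : IsClosed (g : Set (E × F))) :
    g.adjoint.adjoint = g := by
  refine le_antisymm (fun x hx ↦ ?_) (fun x hx ↦ ?_)
  · let G : Submodule 𝕜 (WithLp 2 (E × F)) := g.comap (WithLp.linearEquiv 2 𝕜 (E × F)).toLinearMap
    have : CompleteSpace G := (hg.preimage (WithLp.prod_continuous_ofLp 2 E F)).completeSpace_coe
    suffices WithLp.toLp 2 x ∈ Gᗮᗮ by rwa [orthogonal_orthogonal] at this
    refine (mem_orthogonal' _ _).mpr fun v hv ↦ ?_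
    -- `v ⊥ G` says that the rotated vector `(v₂, -v₁)` lies in the adjoint of `g`
    have hv_adj : (v.ofLp.2, -v.ofLp.1) ∈ g.adjoint := by
      refine (mem_adjoint_iff _ _).mpr fun a b hab ↦ ?_
      have hvab := congrArg (starRingEnd 𝕜) ((mem_orthogonal' _ _).mp hv (WithLp.toLp 2 (a, b)) hab)
      simp only [WithLp.prod_inner_apply, map_add, inner_conj_symm, map_zero] at hvab
      simp only [inner_neg_right]
      linear_combination hvab
    have hxv := congrArg (starRingEnd 𝕜) ((mem_adjoint_iff _ _).mp hx _ _ hv_adj)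
    simp only [map_sub, inner_neg_left, map_neg, inner_conj_symm, map_zero] at hxv
    rw [WithLp.prod_inner_apply]
    linear_combination -hxv
  · refine (mem_adjoint_iff _ _).mpr fun a b hab ↦ ?_
    have hxab := congrArg (starRingEnd 𝕜) ((mem_adjoint_iff _ _).mp hab x.1 x.2 hx)
    simp only [map_sub, inner_conj_symm, map_zero] at hxab
    linear_combination -hxab

end Submodule

section Projection

variable {𝕜 E : Type*} [RCLike 𝕜] [NormedAddCommGroup E] [InnerProductSpace 𝕜 E] [CompleteSpace E]

namespace ContinuousLinearMap

theorem isIdempotentElem_adjoint {P : E →L[𝕜] E} (hP : IsIdempotentElem P) :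
    IsIdempotentElem P.adjoint :=
  star_eq_adjoint P ▸ hP.star

theorem range_adjoint_of_isIdempotentElem {P : E →L[𝕜] E} (hP : IsIdempotentElem P) :
    P.adjoint.range = P.kerᗮ := by
  rw [orthogonal_ker,
    (IsIdempotentElem.isClosed_range (isIdempotentElem_adjoint hP)).submodule_topologicalClosure_eq]

end ContinuousLinearMap

namespace Submodule.IsTopCompl

variable {p q : Submodule 𝕜 E}

theorem range_adjoint_projectionL (h : p.IsTopCompl q) :
    (p.projectionL q h).adjoint.range = qᗮ := by
  rw [ContinuousLinearMap.range_adjoint_of_isIdempotentElem (isIdempotentElem_projectionL h),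
    ker_projectionL]

theorem ker_adjoint_projectionL (h : p.IsTopCompl q) :
    (p.projectionL q h).adjoint.ker = pᗮ := by
  rw [← ContinuousLinearMap.orthogonal_range, range_projectionL]

theorem isCompl_orthogonal (h : p.IsTopCompl q) : IsCompl qᗮ pᗮ := by
  have hP := ContinuousLinearMap.isIdempotentElem_adjoint (isIdempotentElem_projectionL h)
  rw [← h.range_adjoint_projectionL, ← h.ker_adjoint_projectionL]
  exact LinearMap.IsIdempotentElem.isCompl (ContinuousLinearMap.IsIdempotentElem.toLinearMap hP)

end Submodule.IsTopCompl

end Projection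

namespace LinearPMap

section Closed

variable {𝕜 E : Type*} [RCLike 𝕜] [NormedAddCommGroup E] [InnerProductSpace 𝕜 E] [CompleteSpace E]
  {S : E →ₗ.[𝕜] E}

theorem dense_adjoint_domain (hS : Dense (S.domain : Set E)) (hc : S.IsClosed) :
    Dense (S†.domain : Set E) := by
  rw [Submodule.dense_iff_topologicalClosure_eq_top, Submodule.topologicalClosure_eq_top_iff,
    Submodule.eq_bot_iff]
  intro u hu
  have hgraph : ((0 : E), u) ∈ S.graph := by
    rw [← Submodule.adjoint_adjoint hc, ← adjoint_graph_eq_graph_adjoint hS,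
      Submodule.mem_adjoint_iff]
    rintro a b hab
    rw [inner_zero_right, zero_sub, neg_eq_zero]
    exact (Submodule.mem_orthogonal _ u).mp hu a (S†.mem_domain_of_mem_graph hab)
  exact S.graph_fst_eq_zero_snd hgraph rfl

theorem adjoint_adjoint (hS : Dense (S.domain : Set E)) (hc : S.IsClosed) : S†† = S := by
  apply eq_of_eq_graph
  rw [adjoint_graph_eq_graph_adjoint (dense_adjoint_domain hS hc),
    adjoint_graph_eq_graph_adjoint hS, Submodule.adjoint_adjoint hc]

theorem exists_adjoint_apply_eq (hS : Dense (S.domain : Set E)) {y w : E}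
    (h : ∀ x : S.domain, ⟪w, x⟫_𝕜 = ⟪y, S x⟫_𝕜) : ∃ hy : y ∈ S†.domain, S† ⟨y, hy⟩ = w :=
  ⟨mem_adjoint_domain_of_exists y ⟨w, h⟩, adjoint_apply_eq hS _ h⟩

end Closed

section Decomposition

variable {R E : Type*} [Ring R] [AddCommGroup E] [Module R E] {S : E →ₗ.[R] E}

def Decomposes (S : E →ₗ.[R] E) (p q : Submodule R E) : Prop :=
  (∀ x : S.domain, (x : E) ∈ p → S x ∈ p) ∧ (∀ x : S.domain, (x : E) ∈ q → S x ∈ q) ∧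
    ∀ x ∈ S.domain, ∃ x₁ ∈ S.domain ⊓ p, ∃ x₂ ∈ S.domain ⊓ q, x = x₁ + x₂

/-- `B S ⊆ S B`. -/
def CommutesWith (S : E →ₗ.[R] E) (B : E →ₗ[R] E) : Prop :=
  ∀ x : S.domain, ∃ h : B x ∈ S.domain, S ⟨B x, h⟩ = B (S x)

theorem Decomposes.symm {p q : Submodule R E} (h : S.Decomposes p q) : S.Decomposes q p := by
  obtain ⟨hp, hq, hsplit⟩ := h
  refine ⟨hq, hp, fun x hx ↦ ?_⟩
  obtain ⟨x₁, hx₁, x₂, hx₂, rfl⟩ := hsplit x hx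
  exact ⟨x₂, hx₂, x₁, hx₁, add_comm x₁ x₂⟩

theorem CommutesWith.decomposes {P : E →ₗ[R] E} (hP : IsIdempotentElem P)
    (hc : S.CommutesWith P) : S.Decomposes (LinearMap.range P) (LinearMap.ker P) := by
  have hPP (x : E) : P (P x) = P x := congrArg (· x) hP.eq
  refine ⟨fun x hx ↦ ?_, fun x hx ↦ ?_, fun x hx ↦ ?_⟩
  · obtain ⟨h, hSP⟩ := hc x
    rw [LinearMap.IsIdempotentElem.mem_range_iff hP] at hx ⊢
    rw [← hSP, ← congrArg S (Subtype.ext hx.symm)]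
  · obtain ⟨h, hSP⟩ := hc x
    rw [LinearMap.mem_ker] at hx ⊢
    rw [← hSP, ← S.map_zero]
    exact congrArg S (Subtype.ext hx)
  · obtain ⟨h, -⟩ := hc ⟨x, hx⟩
    refine ⟨P x, ⟨h, LinearMap.mem_range_self P x⟩, x - P x,
      ⟨S.domain.sub_mem hx h, ?_⟩, (add_sub_cancel _ _).symm⟩
    rw [SetLike.mem_coe, LinearMap.mem_ker, P.map_sub, hPP, sub_self]

theorem Decomposes.commutesWith {P : E →ₗ[R] E} (hP : IsIdempotentElem P)
    (hd : S.Decomposes (LinearMap.range P) (LinearMap.ker P)) : S.CommutesWith P := by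
  obtain ⟨hrange, hker, hsplit⟩ := hd
  intro x
  obtain ⟨x₁, ⟨hx₁, hx₁p⟩, x₂, ⟨hx₂, hx₂q⟩, hx⟩ := hsplit x x.2
  have hPx : P x = x₁ := by
    rw [hx, P.map_add, (LinearMap.IsIdempotentElem.mem_range_iff hP).mp hx₁p, hx₂q, add_zero]
  have hSx : S x = S ⟨x₁, hx₁⟩ + S ⟨x₂, hx₂⟩ := by
    rw [← S.map_add]
    exact congrArg S (Subtype.ext hx)
  refine ⟨hPx ▸ hx₁, ?_⟩
  rw [hSx, P.map_add, (LinearMap.IsIdempotentElem.mem_range_iff hP).mp (hrange _ hx₁p),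
    hker _ hx₂q, add_zero]
  exact congrArg S (Subtype.ext hPx)

theorem Decomposes.commutesWith_projectionL [TopologicalSpace E] {p q : Submodule R E}
    (h : p.IsTopCompl q) (hd : S.Decomposes p q) : S.CommutesWith (p.projectionL q h) := by
  refine Decomposes.commutesWith (ContinuousLinearMap.IsIdempotentElem.toLinearMap
    (Submodule.isIdempotentElem_projectionL h)) ?_
  rwa [Submodule.range_projectionL, Submodule.ker_projectionL]

end Decomposition

section Adjoint

variable {𝕜 E : Type*} [RCLike 𝕜] [NormedAddCommGroup E] [InnerProductSpace 𝕜 E] [CompleteSpace E]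
  {S : E →ₗ.[𝕜] E}

theorem CommutesWith.adjoint (hS : Dense (S.domain : Set E)) {B : E →L[𝕜] E}
    (h : S.CommutesWith B) : S†.CommutesWith B.adjoint := by
  intro y
  refine exists_adjoint_apply_eq hS fun x ↦ ?_
  obtain ⟨hBx, hSB⟩ := h x
  calc ⟪B.adjoint (S† y), x⟫_𝕜 = ⟪S† y, B x⟫_𝕜 := B.adjoint_inner_left _ _
    _ = ⟪(y : E), S ⟨B x, hBx⟩⟫_𝕜 := adjoint_isFormalAdjoint hS y ⟨B x, hBx⟩
    _ = ⟪(y : E), B (S x)⟫_𝕜 := congrArg (inner 𝕜 (y : E)) hSB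
    _ = ⟪B.adjoint y, S x⟫_𝕜 := (B.adjoint_inner_left _ _).symm

theorem Decomposes.adjoint (hS : Dense (S.domain : Set E)) {p q : Submodule 𝕜 E}
    (h : p.IsTopCompl q) (hd : S.Decomposes p q) : S†.Decomposes qᗮ pᗮ := by
  have hP := ContinuousLinearMap.isIdempotentElem_adjoint (Submodule.isIdempotentElem_projectionL h)
  rw [← h.range_adjoint_projectionL, ← h.ker_adjoint_projectionL]
  exact ((hd.commutesWith_projectionL h).adjoint hS).decomposes
    (ContinuousLinearMap.IsIdempotentElem.toLinearMap hP)

end Adjoint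

section RelativeResolvent

variable {R E : Type*} [Ring R] [AddCommGroup E] [Module R E] [TopologicalSpace E]

/-- `(S - z) T = P` and `T (S - z) ⊆ P`, so that `T` inverts `S - z` on the range of `P`. -/
def IsRelativeResolvent (S : E →ₗ.[R] E) (P T : E →L[R] E) (z : R) : Prop :=
  (∀ x, ∃ h : T x ∈ S.domain, S ⟨T x, h⟩ - z • T x = P x) ∧
    ∀ x : S.domain, T (S x - z • (x : E)) = P x

variable {S : E →ₗ.[R] E} {P T : E →L[R] E} {z : R}

theorem IsRelativeResolvent.apply_apply_comm (h : S.IsRelativeResolvent P T z) (x : E) :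
    T (P x) = P (T x) := by
  obtain ⟨hTx, hST⟩ := h.1 x
  rw [← hST]
  exact h.2 ⟨T x, hTx⟩

theorem IsRelativeResolvent.mapsTo_range (hP : IsIdempotentElem P)
    (h : S.IsRelativeResolvent P T z) : ∀ x ∈ P.range, T x ∈ P.range := by
  simp only [LinearMap.IsIdempotentElem.mem_range_iff
    (ContinuousLinearMap.IsIdempotentElem.toLinearMap hP), ContinuousLinearMap.coe_coe]
  intro x hx
  rw [← h.apply_apply_comm, hx]

end RelativeResolvent

theorem IsRelativeResolvent.adjoint {𝕜 E : Type*} [RCLike 𝕜] [NormedAddCommGroup E]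
    [InnerProductSpace 𝕜 E] [CompleteSpace E] {S : E →ₗ.[𝕜] E} (hS : Dense (S.domain : Set E))
    {P T : E →L[𝕜] E} {z : 𝕜} (h : S.IsRelativeResolvent P T z) :
    S†.IsRelativeResolvent P.adjoint T.adjoint (conj z) := by
  refine ⟨fun y ↦ ?_, fun y ↦ ?_⟩
  · have hgraph (x : S.domain) :
        ⟪P.adjoint y + conj z • T.adjoint y, x⟫_𝕜 = ⟪T.adjoint y, S x⟫_𝕜 := by
      have hTS : T (S x) = P x + z • T x := by rw [← h.2 x, T.map_sub, T.map_smul, sub_add_cancel]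
      rw [T.adjoint_inner_left, hTS, inner_add_left, inner_smul_left, P.adjoint_inner_left,
        T.adjoint_inner_left, inner_add_right, inner_smul_right, RCLike.conj_conj]
    obtain ⟨hy, hSy⟩ := exists_adjoint_apply_eq hS hgraph
    exact ⟨hy, by rw [hSy, add_sub_cancel_right]⟩
  · refine ext_inner_right 𝕜 fun x ↦ ?_
    obtain ⟨hTx, hST⟩ := h.1 x
    rw [T.adjoint_inner_left, P.adjoint_inner_left, ← hST, inner_sub_left, inner_smul_left,
      RCLike.conj_conj, adjoint_isFormalAdjoint hS y ⟨T x, hTx⟩, inner_sub_right, inner_smul_right]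

section HasResOn

variable {V : Type*} [NormedAddCommGroup V] [NormedSpace ℂ V] {S : V →ₗ.[ℂ] V}
  {P : V →L[ℂ] V} {z : ℂ}

theorem IsRelativeResolvent.hasResOn {T : V →L[ℂ] V} (hP : IsIdempotentElem P)
    (hc : S.CommutesWith P) (h : S.IsRelativeResolvent P T z) :
    HasResOn S P.range z (T.restrict (h.mapsTo_range hP)) := by
  have hP' := ContinuousLinearMap.IsIdempotentElem.toLinearMap hP
  have hrange := (hc.decomposes hP').1
  refine ⟨fun y ↦ ?_, fun x hx ↦ ⟨sub_mem (hrange x hx) (Submodule.smul_mem _ z hx), ?_⟩⟩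
  · obtain ⟨hTy, hST⟩ := h.1 y
    exact ⟨hTy, hST.trans ((LinearMap.IsIdempotentElem.mem_range_iff hP').mp y.2)⟩
  · exact (h.2 x).trans ((LinearMap.IsIdempotentElem.mem_range_iff hP').mp hx)

theorem _root_.HasResOn.isRelativeResolvent (hc : S.CommutesWith P)
    {R : P.range →L[ℂ] P.range} (h : HasResOn S P.range z R) :
    S.IsRelativeResolvent P (P.range.subtypeL ∘L R ∘L P.rangeRestrict) z := by
  refine ⟨fun x ↦ h.1 (P.rangeRestrict x), fun x ↦ ?_⟩
  obtain ⟨hPx, hSP⟩ := hc x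
  obtain ⟨hmem, hRP⟩ := h.2 ⟨P x, hPx⟩ (LinearMap.mem_range_self (P : V →ₗ[ℂ] V) x)
  have hPS : P.rangeRestrict (S x - z • (x : V)) = ⟨S ⟨P x, hPx⟩ - z • P x, hmem⟩ := by
    ext
    simpa using hSP.symm
  simpa [hPS] using hRP

theorem exists_hasResOn_iff_exists_isRelativeResolvent (hP : IsIdempotentElem P)
    (hc : S.CommutesWith P) :
    (∃ R, HasResOn S P.range z R) ↔ ∃ T, S.IsRelativeResolvent P T z :=
  ⟨fun ⟨_, h⟩ ↦ ⟨_, h.isRelativeResolvent hc⟩, fun ⟨_, h⟩ ↦ ⟨_, h.hasResOn hP hc⟩⟩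

end HasResOn

variable {H : Type*} [NormedAddCommGroup H] [InnerProductSpace ℂ H] [CompleteSpace H]
  {S : H →ₗ.[ℂ] H}

theorem exists_hasResOn_range_iff_adjoint (hS : Dense (S.domain : Set H)) (hcl : S.IsClosed)
    {P : H →L[ℂ] H} (hP : IsIdempotentElem P) (hc : S.CommutesWith P) (z : ℂ) :
    (∃ R, HasResOn S P.range z R) ↔ ∃ R, HasResOn S† P.adjoint.range (conj z) R := by
  rw [exists_hasResOn_iff_exists_isRelativeResolvent hP hc,
    exists_hasResOn_iff_exists_isRelativeResolvent
      (ContinuousLinearMap.isIdempotentElem_adjoint hP) (hc.adjoint hS)]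
  refine ⟨fun ⟨T, hT⟩ ↦ ⟨_, hT.adjoint hS⟩, fun ⟨T, hT⟩ ↦ ⟨T.adjoint, ?_⟩⟩
  simpa only [adjoint_adjoint hS hcl, ContinuousLinearMap.adjoint_adjoint, Complex.conj_conj]
    using hT.adjoint (dense_adjoint_domain hS hcl)

theorem Decomposes.exists_hasResOn_iff_adjoint (hS : Dense (S.domain : Set H))
    (hcl : S.IsClosed) {p q : Submodule ℂ H} (h : p.IsTopCompl q) (hd : S.Decomposes p q)
    (z : ℂ) : (∃ R, HasResOn S p z R) ↔ ∃ R, HasResOn S† qᗮ (conj z) R := by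
  have := exists_hasResOn_range_iff_adjoint hS hcl (Submodule.isIdempotentElem_projectionL h)
    (hd.commutesWith_projectionL h) z
  rwa [h.range_adjoint_projectionL, Submodule.range_projectionL] at this

end LinearPMap

/-- if a closed densely defined operator `S` on a Hilbert space decomposes
with respect to `H = H₁ ⊕ H₂`, then `S*` decomposes with respect to
`H = H₂ᗮ ⊕ H₁ᗮ`, with `σ(S*|H₂ᗮ) = σ(S|H₁)*` and `σ(S*|H₁ᗮ) = σ(S|H₂)*`. -/
theorem adjoint_decomposes
    {H : Type*} [NormedAddCommGroup H] [InnerProductSpace ℂ H] [CompleteSpace H]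
    (S : H →ₗ.[ℂ] H) (hdense : Dense (S.domain : Set H))
    (hclosed : IsClosed (S.graph : Set (H × H)))
    (H₁ H₂ : Submodule ℂ H) (hH₁ : IsClosed (H₁ : Set H)) (hH₂ : IsClosed (H₂ : Set H))
    (hcompl : IsCompl H₁ H₂)
    (hinv₁ : ∀ x : S.domain, (x : H) ∈ H₁ → S x ∈ H₁)
    (hinv₂ : ∀ x : S.domain, (x : H) ∈ H₂ → S x ∈ H₂)
    (hsplit : ∀ x ∈ S.domain,
      ∃ x₁ ∈ S.domain ⊓ H₁, ∃ x₂ ∈ S.domain ⊓ H₂, x = x₁ + x₂) :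
    -- S* decomposes with respect to H = H₂ᗮ ⊕ H₁ᗮ
    IsCompl H₂ᗮ H₁ᗮ ∧
    (∀ y : S.adjoint.domain, (y : H) ∈ H₂ᗮ → S.adjoint y ∈ H₂ᗮ) ∧
    (∀ y : S.adjoint.domain, (y : H) ∈ H₁ᗮ → S.adjoint y ∈ H₁ᗮ) ∧
    (∀ y ∈ S.adjoint.domain,
      ∃ y₁ ∈ S.adjoint.domain ⊓ H₂ᗮ, ∃ y₂ ∈ S.adjoint.domain ⊓ H₁ᗮ, y = y₁ + y₂) ∧
    -- σ(S*|H₂ᗮ) = σ(S|H₁)*, expressed via equality of resolvent sets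
    (∀ z : ℂ, (∃ Rz : ↥H₁ →L[ℂ] ↥H₁, HasResOn S H₁ z Rz) ↔
      (∃ Rz : ↥H₂ᗮ →L[ℂ] ↥H₂ᗮ, HasResOn S.adjoint H₂ᗮ (starRingEnd ℂ z) Rz)) ∧
    -- σ(S*|H₁ᗮ) = σ(S|H₂)*
    (∀ z : ℂ, (∃ Rz : ↥H₂ →L[ℂ] ↥H₂, HasResOn S H₂ z Rz) ↔
      (∃ Rz : ↥H₁ᗮ →L[ℂ] ↥H₁ᗮ, HasResOn S.adjoint H₁ᗮ (starRingEnd ℂ z) Rz)) := by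
  have htop : H₁.IsTopCompl H₂ := Submodule.IsCompl.isTopCompl_of_isClosed hcompl hH₁ hH₂
  have hdec : S.Decomposes H₁ H₂ := ⟨hinv₁, hinv₂, hsplit⟩
  obtain ⟨hinv₂', hinv₁', hsplit'⟩ := hdec.adjoint hdense htop
  exact ⟨htop.isCompl_orthogonal, hinv₂', hinv₁', hsplit',
    hdec.exists_hasResOn_iff_adjoint hdense hclosed htop,
    hdec.symm.exists_hasResOn_iff_adjoint hdense hclosed htop.symm⟩
end

section
/- In the setting of the previous decomposition, if P₁, P₂ are the projections associated with H = H₁ ⊕ H₂ and z ∈ ρ(S|H₁), then z̄ ∈ ρ(S*|H₂⊥) and ‖(S*|H₂⊥ − z̄)⁻¹‖ ≤ ‖P₁‖ · ‖(S|H₁ − z)⁻¹‖. -/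
local notation "⟪" x ", " y "⟫" => @inner ℂ _ _ x y

/-- with `P₁, P₂` the projections associated with `H = H₁ ⊕ H₂`, if
`z ∈ ρ(S|H₁)`, then `z̄ ∈ ρ(S*|H₂ᗮ)` and
`‖(S*|H₂ᗮ − z̄)⁻¹‖ ≤ ‖P₁‖ · ‖(S|H₁ − z)⁻¹‖`. -/
theorem adjoint_resolvent_bound
    {H : Type*} [NormedAddCommGroup H] [InnerProductSpace ℂ H] [CompleteSpace H]
    (S : H →ₗ.[ℂ] H) (hdense : Dense (S.domain : Set H))
    (hclosed : IsClosed (S.graph : Set (H × H)))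
    (H₁ H₂ : Submodule ℂ H) (hH₁ : IsClosed (H₁ : Set H)) (hH₂ : IsClosed (H₂ : Set H))
    (hcompl : IsCompl H₁ H₂)
    (hinv₁ : ∀ x : S.domain, (x : H) ∈ H₁ → S x ∈ H₁)
    (hinv₂ : ∀ x : S.domain, (x : H) ∈ H₂ → S x ∈ H₂)
    (hsplit : ∀ x ∈ S.domain,
      ∃ x₁ ∈ S.domain ⊓ H₁, ∃ x₂ ∈ S.domain ⊓ H₂, x = x₁ + x₂)
    (P₁ P₂ : H →L[ℂ] H)
    (hP₁mem : ∀ x : H, P₁ x ∈ H₁) (hP₂mem : ∀ x : H, P₂ x ∈ H₂)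
    (hPsum : ∀ x : H, P₁ x + P₂ x = x)
    (hP₁id : ∀ x ∈ H₁, P₁ x = x) (hP₂id : ∀ x ∈ H₂, P₂ x = x) :
    ∀ z : ℂ, ∀ R₁ : ↥H₁ →L[ℂ] ↥H₁, HasResOn S H₁ z R₁ →
      ∃ R' : ↥H₂ᗮ →L[ℂ] ↥H₂ᗮ,
        HasResOn S.adjoint H₂ᗮ (starRingEnd ℂ z) R' ∧ ‖R'‖ ≤ ‖P₁‖ * ‖R₁‖ := by
  intro z R₁ hR
  -- basic projection facts
  have hP₁zero : ∀ v ∈ H₂, P₁ v = 0 := by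
    intro v hv
    have h := hPsum v
    rw [hP₂id v hv] at h
    exact add_eq_right.mp h
  have hP₂zero : ∀ v ∈ H₁, P₂ v = 0 := by
    intro v hv
    have h := hPsum v
    rw [hP₁id v hv] at h
    exact add_eq_left.mp h
  -- orthogonality helper
  have horth : ∀ u : H, (u ∈ H₂ᗮ) → ∀ v ∈ H₂, ⟪u, v⟫ = 0 := by
    intro u hu v hv
    exact inner_eq_zero_symm.mpr (hu v hv)
  -- the corestriction of P₁
  set Q : H →L[ℂ] ↥H₁ := P₁.codRestrict H₁ hP₁mem with hQ
  have hQcoe : ∀ x : H, ((Q x : H)) = P₁ x := fun _ => rfl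
  -- the bounded operator T = ι ∘ R₁ ∘ Q : H → H
  set T : H →L[ℂ] H := H₁.subtypeL.comp (R₁.comp Q) with hT
  have hTcoe : ∀ x : H, T x = (R₁ (Q x) : H) := fun _ => rfl
  -- T vanishes on H₂
  have hTzero : ∀ v ∈ H₂, T v = 0 := by
    intro v hv
    have : Q v = 0 := Subtype.ext (by simp [hQcoe, hP₁zero v hv])
    simp [hTcoe, this]
  -- splitting helper: for x ∈ S.domain, decompose
  have hsplit' : ∀ x : S.domain, ∃ x₁ : S.domain, (x₁ : H) ∈ H₁ ∧ ∃ x₂ : S.domain,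
      (x₂ : H) ∈ H₂ ∧ x = x₁ + x₂ := by
    intro x
    obtain ⟨x₁, ⟨hx₁d, hx₁m⟩, x₂, ⟨hx₂d, hx₂m⟩, hx⟩ := hsplit (x : H) x.2
    exact ⟨⟨x₁, hx₁d⟩, hx₁m, ⟨x₂, hx₂d⟩, hx₂m, Subtype.ext hx⟩
  -- Key identity A : T (S x) = P₁ x + z • T x for x ∈ S.domain
  have keyA : ∀ x : S.domain, T (S x) = P₁ (x : H) + z • T (x : H) := by
    intro x
    obtain ⟨x₁, hx₁m, x₂, hx₂m, hx⟩ := hsplit' x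
    have hSx : S x = S x₁ + S x₂ := by rw [hx, S.map_add]
    have hSx₁m : S x₁ ∈ H₁ := hinv₁ x₁ hx₁m
    have hSx₂m : S x₂ ∈ H₂ := hinv₂ x₂ hx₂m
    have hP₁Sx : P₁ (S x) = S x₁ := by
      rw [hSx, map_add, hP₁id _ hSx₁m, hP₁zero _ hSx₂m, add_zero]
    have hP₁x : P₁ (x : H) = (x₁ : H) := by
      have : (x : H) = (x₁ : H) + (x₂ : H) := by rw [hx]; rfl
      rw [this, map_add, hP₁id _ hx₁m, hP₁zero _ hx₂m, add_zero]
    obtain ⟨hmem, heq⟩ := hR.2 x₁ hx₁m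
    have hQSx : Q (S x) = ⟨S x₁ - z • (x₁ : H), hmem⟩ + z • (⟨(x₁ : H), hx₁m⟩ : H₁) := by
      apply Subtype.ext
      simp only [hQcoe, hP₁Sx, Submodule.coe_add, Submodule.coe_smul]
      abel
    have hQx : Q (x : H) = (⟨(x₁ : H), hx₁m⟩ : H₁) := Subtype.ext (by simp [hQcoe, hP₁x])
    rw [hTcoe, hTcoe, hQSx, hQx, map_add, map_smul]
    push_cast
    rw [heq, hP₁x]
  -- Key identity B : T x ∈ D(S) and S (T x) = z • T x + P₁ x
  have keyB : ∀ x : H, ∃ h : T x ∈ S.domain, S ⟨T x, h⟩ = z • T x + P₁ x := by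
    intro x
    obtain ⟨h, heq⟩ := hR.1 (Q x)
    refine ⟨h, ?_⟩
    have h2 := sub_eq_iff_eq_add.mp heq
    show S ⟨(R₁ (Q x) : H), h⟩ = z • (R₁ (Q x) : H) + P₁ x
    rw [h2, hQcoe x]
    abel
  -- the adjoint operator A = T*
  set A : H →L[ℂ] H := ContinuousLinearMap.adjoint T with hA
  have hAinner : ∀ (y x : H), ⟪A y, x⟫ = ⟪y, T x⟫ := fun y x =>
    ContinuousLinearMap.adjoint_inner_left T x y
  -- A maps everything into H₂ᗮ
  have hAmem : ∀ y : H, A y ∈ H₂ᗮ := by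
    intro y v hv
    rw [← inner_eq_zero_symm, hAinner, hTzero v hv, inner_zero_right]
  -- the resolvent candidate
  set R' : ↥H₂ᗮ →L[ℂ] ↥H₂ᗮ := (A.comp H₂ᗮ.subtypeL).codRestrict H₂ᗮ
    (fun y => hAmem (y : H)) with hR'
  have hR'coe : ∀ y : ↥H₂ᗮ, ((R' y : H)) = A (y : H) := fun _ => rfl
  refine ⟨R', ⟨?_, ?_⟩, ?_⟩
  · -- property 1
    intro y
    -- the candidate value of S† (A y)
    set w : H := (y : H) + (starRingEnd ℂ z) • A (y : H) with hw
    have hinner : ∀ x : S.domain, ⟪w, (x : H)⟫ = ⟪A (y : H), S x⟫ := by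
      intro x
      rw [hAinner, keyA x]
      rw [inner_add_right, inner_smul_right]
      have h1 : ⟪(y : H), P₁ (x : H)⟫ = ⟪(y : H), (x : H)⟫ := by
        have : P₁ (x : H) = (x : H) - P₂ (x : H) := eq_sub_of_add_eq (hPsum (x : H))
        rw [this, inner_sub_right, horth _ y.2 _ (hP₂mem (x : H)), sub_zero]
      rw [h1, hw, inner_add_left, inner_smul_left, ← hAinner]
      simp [RingHom.id_apply, starRingEnd_self_apply]
    have hmem : A (y : H) ∈ S.adjoint.domain :=
      LinearPMap.mem_adjoint_domain_of_exists _ ⟨w, hinner⟩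
    refine ⟨hmem, ?_⟩
    have happ : S.adjoint ⟨A (y : H), hmem⟩ = w := by
      exact LinearPMap.adjoint_apply_eq hdense ⟨A (y : H), hmem⟩ hinner
    show S.adjoint ⟨A (y : H), hmem⟩ - (starRingEnd ℂ z) • A (y : H) = (y : H)
    rw [happ, hw]
    abel
  · -- property 2
    intro u hu
    set w : H := S.adjoint u - (starRingEnd ℂ z) • (u : H) with hw
    have hform := LinearPMap.adjoint_isFormalAdjoint hdense (T := S)
    -- w ∈ H₂ᗮ
    have hwmem : w ∈ H₂ᗮ := by
      intro v hv
      -- first show ⟪w, P₂ x⟫ = 0 for all x in a dense set, via continuity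
      have hfun : (fun x : H => ⟪w, P₂ x⟫) = fun _ : H => (0 : ℂ) := by
        apply Continuous.ext_on hdense
        · exact (innerSL ℂ w).continuous.comp P₂.continuous
        · exact continuous_const
        · rintro x hx
          obtain ⟨x₁, hx₁m, x₂, hx₂m, hxs⟩ := hsplit' ⟨x, hx⟩
          have hP₂x : P₂ x = (x₂ : H) := by
            have : x = (x₁ : H) + (x₂ : H) := congrArg Subtype.val hxs
            rw [this, map_add, hP₂zero _ hx₁m, hP₂id _ hx₂m, zero_add]
          have h1 : ⟪S.adjoint u, (x₂ : H)⟫ = ⟪(u : H), S x₂⟫ := hform u x₂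
          have h2 : ⟪(u : H), S x₂⟫ = 0 := horth _ hu _ (hinv₂ x₂ hx₂m)
          have h3 : ⟪(u : H), (x₂ : H)⟫ = 0 := horth _ hu _ hx₂m
          simp only [hP₂x, hw, inner_sub_left, inner_smul_left, h1, h2, h3,
            starRingEnd_self_apply, mul_zero, sub_zero]
      have := congrFun hfun v
      rw [hP₂id v hv] at this
      rw [← inner_eq_zero_symm]
      exact this
    refine ⟨hwmem, ?_⟩
    rw [hR'coe]
    -- show A w = u via inner products
    apply ext_inner_right ℂ
    intro x
    obtain ⟨hTd, hTeq⟩ := keyB x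
    have h1 : ⟪A w, x⟫ = ⟪w, T x⟫ := hAinner w x
    have h2 : ⟪S.adjoint u, T x⟫ = ⟪(u : H), S ⟨T x, hTd⟩⟫ := hform u ⟨T x, hTd⟩
    have h3 : ⟪(u : H), P₂ x⟫ = 0 := horth _ hu _ (hP₂mem x)
    rw [h1, hw, inner_sub_left, inner_smul_left, h2, hTeq, inner_add_right,
      inner_smul_right, starRingEnd_self_apply]
    have hP₁x : ⟪(u : H), P₁ x⟫ = ⟪(u : H), x⟫ := by
      have : P₁ x = x - P₂ x := eq_sub_of_add_eq (hPsum x)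
      rw [this, inner_sub_right, h3, sub_zero]
    rw [hP₁x]
    ring
  · -- the norm bound
    have hTnorm : ‖T‖ ≤ ‖P₁‖ * ‖R₁‖ := by
      apply ContinuousLinearMap.opNorm_le_bound _ (by positivity)
      intro x
      have h1 : ‖T x‖ = ‖R₁ (Q x)‖ := by rw [hTcoe]; rfl
      have h2 : ‖R₁ (Q x)‖ ≤ ‖R₁‖ * ‖Q x‖ := R₁.le_opNorm _
      have h3 : ‖Q x‖ = ‖P₁ x‖ := rfl
      have h4 : ‖P₁ x‖ ≤ ‖P₁‖ * ‖x‖ := P₁.le_opNorm x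
      calc ‖T x‖ = ‖R₁ (Q x)‖ := h1
        _ ≤ ‖R₁‖ * ‖Q x‖ := h2
        _ = ‖R₁‖ * ‖P₁ x‖ := by rw [h3]
        _ ≤ ‖R₁‖ * (‖P₁‖ * ‖x‖) := by
            exact mul_le_mul_of_nonneg_left h4 (ContinuousLinearMap.opNorm_nonneg R₁)
        _ = ‖P₁‖ * ‖R₁‖ * ‖x‖ := by ring
    have hAnorm : ‖A‖ = ‖T‖ := ContinuousLinearMap.adjoint.norm_map T
    have hR'norm : ‖R'‖ ≤ ‖A‖ := by
      apply ContinuousLinearMap.opNorm_le_bound _ (norm_nonneg _)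
      intro y
      have : ‖R' y‖ = ‖A (y : H)‖ := by
        rw [← hR'coe]; rfl
      rw [this]
      calc ‖A (y : H)‖ ≤ ‖A‖ * ‖(y : H)‖ := A.le_opNorm _
        _ = ‖A‖ * ‖y‖ := rfl
    calc ‖R'‖ ≤ ‖A‖ := hR'norm
      _ = ‖T‖ := hAnorm
      _ ≤ ‖P₁‖ * ‖R₁‖ := hTnorm
end

section
/- If S is sectorially dichotomous with angle θ on a Hilbert space, then its adjoint S* is also sectorially dichotomous with angle θ. -/
open ComplexConjugate ContinuousLinearMap Submodule
open scoped InnerProductSpace InnerProduct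

theorem Complex.abs_arg_conj (z : ℂ) : |(conj z).arg| = |z.arg| := by
  rw [arg_conj]
  split_ifs with h
  · rw [h]
  · exact abs_neg _

theorem ContinuousLinearMap.norm_restrict_le {𝕜 E F : Type*} [NontriviallyNormedField 𝕜]
    [SeminormedAddCommGroup E] [SeminormedAddCommGroup F] [NormedSpace 𝕜 E] [NormedSpace 𝕜 F]
    (f : E →L[𝕜] F) {W : Submodule 𝕜 E} {W' : Submodule 𝕜 F} (hf : ∀ x ∈ W, f x ∈ W') :
    ‖f.restrict hf‖ ≤ ‖f‖ :=
  opNorm_le_bound _ (norm_nonneg f) fun x => f.le_opNorm x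

def SectorBound {α : Type*} [Norm α] (θ : ℝ) (P : ℂ → α → Prop) : Prop :=
  ∀ θ' : ℝ, θ < θ' → θ' ≤ Real.pi →
    ∃ M > (0 : ℝ), ∀ z : ℂ, θ' ≤ |z.arg| → ∃ R : α, P z R ∧ ‖R‖ ≤ M / ‖z‖

theorem SectorBound.of_conj {α β : Type*} [Norm α] [Norm β] {θ C : ℝ} {P : ℂ → α → Prop}
    {Q : ℂ → β → Prop} (hC : 0 ≤ C) (hP : SectorBound θ P)
    (hPQ : ∀ z R, P (conj z) R → ∃ R', Q z R' ∧ ‖R'‖ ≤ ‖R‖ * C) : SectorBound θ Q := by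
  intro θ' hθ' hθ'π
  obtain ⟨M, hM, hMz⟩ := hP θ' hθ' hθ'π
  refine ⟨M * (C + 1), mul_pos hM (by linarith), fun z hz => ?_⟩
  obtain ⟨R, hR, hRM⟩ := hMz (conj z) (by rwa [Complex.abs_arg_conj])
  obtain ⟨R', hR', hR'R⟩ := hPQ z R hR
  rw [Complex.norm_conj] at hRM
  refine ⟨R', hR', ?_⟩
  calc ‖R'‖ ≤ ‖R‖ * C := hR'R
    _ ≤ M / ‖z‖ * C := by gcongr
    _ ≤ M / ‖z‖ * (C + 1) := by gcongr; linarith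
    _ = M * (C + 1) / ‖z‖ := by ring

section Banach

variable {V : Type*} [NormedAddCommGroup V] [NormedSpace ℂ V] {S : V →ₗ.[ℂ] V}

/-- `E S ⊆ S E`. -/
def LinearPMap.CommutesWith_s8 (S : V →ₗ.[ℂ] V) (E : V →L[ℂ] V) : Prop :=
  ∀ x : S.domain, ∃ hx : E x ∈ S.domain, S ⟨E x, hx⟩ = E (S x)

theorem LinearPMap.CommutesWith_s8.apply_mem_of_isProj {E : V →L[ℂ] V} {W : Submodule ℂ V}
    (hc : S.CommutesWith_s8 E) (hE : LinearMap.IsProj W E) (x : S.domain) (hxW : (x : V) ∈ W) :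
    S x ∈ W := by
  obtain ⟨hx, hSx⟩ := hc x
  have hEx : (⟨E x, hx⟩ : S.domain) = x := Subtype.ext (hE.map_id _ hxW)
  rw [← hEx, hSx]
  exact hE.map_mem _

theorem commutesWith_projectionL {p q : Submodule ℂ V} (hpq : IsTopCompl p q) {z : ℂ}
    {R : V →L[ℂ] V} {Rp : p →L[ℂ] p} {Rq : q →L[ℂ] q} (hR : HasRes S z R)
    (hRp : HasResOn S p z Rp) (hRq : HasResOn S q z Rq) :
    S.CommutesWith_s8 (p.projectionL q hpq) := by
  intro x
  set y := S x - z • (x : V)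
  obtain ⟨hup, hSup⟩ := hRp.1 (p.projectionOntoL q hpq y)
  obtain ⟨huq, hSuq⟩ := hRq.1 (q.projectionOntoL p hpq.symm y)
  have hx : (x : V) = Rp (p.projectionOntoL q hpq y) + Rq (q.projectionOntoL p hpq.symm y) := by
    have hSu : S ⟨_, add_mem hup huq⟩ - z • ((Rp (p.projectionOntoL q hpq y) : V) +
        Rq (q.projectionOntoL p hpq.symm y)) = y := by
      have hsplit : (⟨_, add_mem hup huq⟩ : S.domain) = ⟨_, hup⟩ + ⟨_, huq⟩ := rfl
      rw [hsplit, LinearPMap.map_add, smul_add, add_sub_add_comm, hSup, hSuq,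
        coe_projectionOntoL_apply, coe_projectionOntoL_apply,
        projectionL_add_projectionL_eq_self]
    exact (hR.2 x).symm.trans ((congrArg R hSu.symm).trans (hR.2 ⟨_, add_mem hup huq⟩))
  have hEx : p.projectionL q hpq x = Rp (p.projectionOntoL q hpq y) := by
    rw [hx, map_add, projectionL_apply_left, projectionL_apply_right, add_zero]
  have hdom : (⟨_, hup⟩ : S.domain) = ⟨p.projectionL q hpq x, hEx ▸ hup⟩ := Subtype.ext hEx.symm
  refine ⟨hEx ▸ hup, ?_⟩
  rw [← hdom, sub_eq_iff_eq_add.1 hSup, ← hEx, coe_projectionOntoL_apply, map_sub, map_smul]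
  abel

/-- `A` inverts `S - z` up to `E`: `(S - z) A = E` and `A (S - z) ⊆ E`. For `E = 1` this is
`HasRes`; for a projection `E` commuting with `S` it is the resolvent of the part of `S` in the
range of `E`, extended by zero on the kernel. -/
def HasResAlong (S : V →ₗ.[ℂ] V) (z : ℂ) (E A : V →L[ℂ] V) : Prop :=
  (∀ y : V, ∃ h : A y ∈ S.domain, S ⟨A y, h⟩ - z • A y = E y) ∧
  (∀ x : S.domain, A (S x - z • (x : V)) = E x)

theorem HasResAlong.hasResOn {z : ℂ} {E A : V →L[ℂ] V} {W : Submodule ℂ V}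
    (hA : HasResAlong S z E A) (hE : LinearMap.IsProj W E) (hAW : ∀ v, A v ∈ W)
    (hSW : ∀ x : S.domain, (x : V) ∈ W → S x ∈ W) :
    HasResOn S W z (A.restrict fun v _ => hAW v) := by
  constructor
  · intro y
    obtain ⟨hy, hSy⟩ := hA.1 y
    exact ⟨hy, hSy.trans (hE.map_id _ y.2)⟩
  · intro x hx
    exact ⟨sub_mem (hSW x hx) (W.smul_mem z hx), (hA.2 x).trans (hE.map_id _ hx)⟩

theorem HasResOn.hasResAlong_projectionL {p q : Submodule ℂ V} (hpq : IsTopCompl p q) {z : ℂ}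
    {R : p →L[ℂ] p} (hR : HasResOn S p z R) (hc : S.CommutesWith_s8 (p.projectionL q hpq)) :
    HasResAlong S z (p.projectionL q hpq) (p.subtypeL ∘L R ∘L p.projectionOntoL q hpq) := by
  refine ⟨fun y => hR.1 _, fun x => ?_⟩
  obtain ⟨hx, hSx⟩ := hc x
  obtain ⟨hmem, hRx⟩ := hR.2 ⟨_, hx⟩ (projectionL_apply_mem hpq x)
  have hPx : p.projectionOntoL q hpq (S x - z • (x : V)) = ⟨_, hmem⟩ := by
    ext
    rw [coe_projectionOntoL_apply, map_sub, map_smul, ← hSx]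
  simpa [hPx] using hRx

end Banach

section Hilbert

variable {H : Type*} [NormedAddCommGroup H] [InnerProductSpace ℂ H] [CompleteSpace H]
  {S : H →ₗ.[ℂ] H}

theorem LinearPMap.exists_adjoint_apply_eq_s8 (hdense : Dense (S.domain : Set H))
    {y w : H} (h : ∀ x : S.domain, ⟪w, x⟫_ℂ = ⟪y, S x⟫_ℂ) :
    ∃ hy : y ∈ S.adjoint.domain, S.adjoint ⟨y, hy⟩ = w :=
  ⟨mem_adjoint_domain_of_exists y ⟨w, h⟩, adjoint_apply_eq hdense _ h⟩

theorem LinearPMap.CommutesWith_s8.adjoint (hdense : Dense (S.domain : Set H))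
    {E : H →L[ℂ] H} (hc : S.CommutesWith_s8 E) : S.adjoint.CommutesWith_s8 (E†) := by
  intro y
  refine exists_adjoint_apply_eq_s8 hdense fun x => ?_
  obtain ⟨hx, hSx⟩ := hc x
  rw [adjoint_inner_left, adjoint_inner_left, ← hSx,
    adjoint_isFormalAdjoint hdense y ⟨E x, hx⟩]

theorem HasResAlong.adjoint (hdense : Dense (S.domain : Set H)) {z : ℂ}
    {E A : H →L[ℂ] H} (hA : HasResAlong S (conj z) E A) :
    HasResAlong S.adjoint z (E†) (A†) := by
  constructor
  · intro y
    have hAS : ∀ x : S.domain, A (S x) = E x + conj z • A x := fun x => by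
      rw [← hA.2 x, map_sub, map_smul, sub_add_cancel]
    obtain ⟨hy, hSy⟩ := LinearPMap.exists_adjoint_apply_eq_s8 hdense (y := (A†) y)
      (w := (E†) y + z • (A†) y) fun x => by
        rw [adjoint_inner_left, hAS, inner_add_left, inner_smul_left, inner_add_right,
          inner_smul_right, adjoint_inner_left, adjoint_inner_left]
    exact ⟨hy, by rw [hSy, add_sub_cancel_right]⟩
  · intro u
    refine ext_inner_right ℂ fun v => ?_
    obtain ⟨hv, hSv⟩ := hA.1 v
    rw [adjoint_inner_left, adjoint_inner_left, inner_sub_left, inner_smul_left,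
      LinearPMap.adjoint_isFormalAdjoint hdense u ⟨A v, hv⟩, ← hSv, inner_sub_right,
      inner_smul_right]

theorem HasRes.adjoint (hdense : Dense (S.domain : Set H)) {z : ℂ}
    {R : H →L[ℂ] H} (hR : HasRes S (conj z) R) : HasRes S.adjoint z (R†) := by
  have h := HasResAlong.adjoint (E := .id ℂ H) hdense hR
  rwa [adjoint_id] at h

variable {p q : Submodule ℂ H} (hpq : IsTopCompl p q)

theorem isProj_adjoint_projectionL : LinearMap.IsProj qᗮ ((p.projectionL q hpq)†) where
  map_mem y := (mem_orthogonal _ _).2 fun u hu => by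
    rw [adjoint_inner_right, projectionL_apply_eq_zero_of_mem_right hpq hu, inner_zero_left]
  map_id y hy := ext_inner_right ℂ fun v => by
    have hq : ⟪y, q.projectionL p hpq.symm v⟫_ℂ = 0 :=
      inner_left_of_mem_orthogonal (coe_mem _) hy
    rw [adjoint_inner_left, ← projectionL_add_projectionL_eq_self hpq v, map_add,
      projectionL_apply_left hpq ⟨_, projectionL_apply_mem _ _⟩,
      projectionL_apply_right hpq ⟨_, projectionL_apply_mem _ _⟩, add_zero, inner_add_right, hq,
      add_zero]

theorem ker_adjoint_projectionL : ((p.projectionL q hpq)†).ker = pᗮ := by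
  rw [← orthogonal_range, range_projectionL]

theorem Submodule.IsTopCompl.isCompl_orthogonal_s8 (hpq : IsTopCompl p q) : IsCompl qᗮ pᗮ := by
  have h : LinearMap.IsProj qᗮ ((p.projectionL q hpq)† : H →ₗ[ℂ] H) :=
    ⟨(isProj_adjoint_projectionL hpq).map_mem, (isProj_adjoint_projectionL hpq).map_id⟩
  simpa [ker_adjoint_projectionL] using h.isCompl

theorem adjoint_apply_mem_orthogonal (hdense : Dense (S.domain : Set H))
    (hc : S.CommutesWith_s8 (p.projectionL q hpq)) (y : S.adjoint.domain) (hy : (y : H) ∈ qᗮ) :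
    S.adjoint y ∈ qᗮ :=
  (hc.adjoint hdense).apply_mem_of_isProj (isProj_adjoint_projectionL hpq) y hy

theorem exists_hasResOn_adjoint_orthogonal (hdense : Dense (S.domain : Set H))
    (hc : S.CommutesWith_s8 (p.projectionL q hpq)) {z : ℂ} {R : p →L[ℂ] p}
    (hR : HasResOn S p (conj z) R) :
    ∃ R' : qᗮ →L[ℂ] qᗮ, HasResOn S.adjoint qᗮ z R' ∧ ‖R'‖ ≤ ‖R‖ * ‖p.projectionOntoL q hpq‖ := by
  set A := p.subtypeL ∘L R ∘L p.projectionOntoL q hpq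
  have hAq : ∀ v, (A†) v ∈ qᗮ := fun v => (mem_orthogonal _ _).2 fun u hu => by
    rw [adjoint_inner_right]
    simp [A, (projectionOntoL_apply_eq_zero_iff hpq).2 hu]
  refine ⟨_, ((hR.hasResAlong_projectionL hpq hc).adjoint hdense).hasResOn
    (isProj_adjoint_projectionL hpq) hAq (adjoint_apply_mem_orthogonal hpq hdense hc), ?_⟩
  calc _ ≤ ‖A†‖ := norm_restrict_le _ _
    _ = ‖A‖ := LinearIsometryEquiv.norm_map _ _
    _ ≤ ‖R ∘L p.projectionOntoL q hpq‖ :=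
      (opNorm_comp_le _ _).trans (mul_le_of_le_one_left (norm_nonneg _) (norm_subtypeL_le p))
    _ ≤ ‖R‖ * ‖p.projectionOntoL q hpq‖ := opNorm_comp_le _ _

end Hilbert

theorem adjoint_sectoriallyDichotomous_general
    {H : Type*} [NormedAddCommGroup H] [InnerProductSpace ℂ H] [CompleteSpace H]
    (S : H →ₗ.[ℂ] H) (hdense : Dense (S.domain : Set H))
    (θ : ℝ)
    (h : ℝ) (hh : 0 < h)
    (Hp Hm : Submodule ℂ H) (hHp : IsClosed (Hp : Set H)) (hHm : IsClosed (Hm : Set H))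
    (hcompl : IsCompl Hp Hm)
    (hstrip : ∀ z : ℂ, |z.re| < h → ∃ Rz : H →L[ℂ] H, HasRes S z Rz)
    (hspecp : ∀ z : ℂ, z.re ≤ 0 → ∃ Rz : ↥Hp →L[ℂ] ↥Hp, HasResOn S Hp z Rz)
    (hspecm : ∀ z : ℂ, 0 ≤ z.re → ∃ Rz : ↥Hm →L[ℂ] ↥Hm, HasResOn S Hm z Rz)
    (hsectp : ∀ θ' : ℝ, θ < θ' → θ' ≤ Real.pi → ∃ M > (0 : ℝ), ∀ z : ℂ,
      θ' ≤ |z.arg| → ∃ Rz : ↥Hp →L[ℂ] ↥Hp, HasResOn S Hp z Rz ∧ ‖Rz‖ ≤ M / ‖z‖)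
    (hsectm : ∀ θ' : ℝ, θ < θ' → θ' ≤ Real.pi → ∃ M > (0 : ℝ), ∀ z : ℂ,
      θ' ≤ |z.arg| → ∃ Rz : ↥Hm →L[ℂ] ↥Hm, HasResOn S Hm (-z) Rz ∧ ‖Rz‖ ≤ M / ‖z‖) :
    -- S* is sectorially dichotomous with angle θ w.r.t. H = H₋ᗮ ⊕ H₊ᗮ
    IsCompl Hmᗮ Hpᗮ ∧
    (∃ h' > (0 : ℝ), ∀ z : ℂ, |z.re| < h' →
      ∃ Rz : H →L[ℂ] H, HasRes S.adjoint z Rz) ∧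
    (∀ y : S.adjoint.domain, (y : H) ∈ Hmᗮ → S.adjoint y ∈ Hmᗮ) ∧
    (∀ y : S.adjoint.domain, (y : H) ∈ Hpᗮ → S.adjoint y ∈ Hpᗮ) ∧
    (∀ z : ℂ, z.re ≤ 0 → ∃ Rz : ↥Hmᗮ →L[ℂ] ↥Hmᗮ, HasResOn S.adjoint Hmᗮ z Rz) ∧
    (∀ z : ℂ, 0 ≤ z.re → ∃ Rz : ↥Hpᗮ →L[ℂ] ↥Hpᗮ, HasResOn S.adjoint Hpᗮ z Rz) ∧
    (∀ θ' : ℝ, θ < θ' → θ' ≤ Real.pi → ∃ M > (0 : ℝ), ∀ z : ℂ,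
      θ' ≤ |z.arg| →
        ∃ Rz : ↥Hmᗮ →L[ℂ] ↥Hmᗮ, HasResOn S.adjoint Hmᗮ z Rz ∧ ‖Rz‖ ≤ M / ‖z‖) ∧
    (∀ θ' : ℝ, θ < θ' → θ' ≤ Real.pi → ∃ M > (0 : ℝ), ∀ z : ℂ,
      θ' ≤ |z.arg| →
        ∃ Rz : ↥Hpᗮ →L[ℂ] ↥Hpᗮ, HasResOn S.adjoint Hpᗮ (-z) Rz ∧ ‖Rz‖ ≤ M / ‖z‖) := by
  have hT : IsTopCompl Hp Hm := IsCompl.isTopCompl_of_isClosed hcompl hHp hHm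
  obtain ⟨R0, hR0⟩ := hstrip 0 (by simpa using hh)
  obtain ⟨Rp0, hRp0⟩ := hspecp 0 le_rfl
  obtain ⟨Rm0, hRm0⟩ := hspecm 0 le_rfl
  have hcp := commutesWith_projectionL hT hR0 hRp0 hRm0
  have hcm := commutesWith_projectionL hT.symm hR0 hRm0 hRp0
  refine ⟨hT.isCompl_orthogonal_s8, ⟨h, hh, fun z hz => ?_⟩,
    adjoint_apply_mem_orthogonal hT hdense hcp, adjoint_apply_mem_orthogonal hT.symm hdense hcm,
    fun z hz => ?_, fun z hz => ?_, ?_, ?_⟩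
  · obtain ⟨R, hR⟩ := hstrip (conj z) (by rwa [Complex.conj_re])
    exact ⟨_, hR.adjoint hdense⟩
  · obtain ⟨R, hR⟩ := hspecp (conj z) (by rwa [Complex.conj_re])
    obtain ⟨R', hR', -⟩ := exists_hasResOn_adjoint_orthogonal hT hdense hcp hR
    exact ⟨R', hR'⟩
  · obtain ⟨R, hR⟩ := hspecm (conj z) (by rwa [Complex.conj_re])
    obtain ⟨R', hR', -⟩ := exists_hasResOn_adjoint_orthogonal hT.symm hdense hcm hR
    exact ⟨R', hR'⟩
  · exact SectorBound.of_conj (norm_nonneg (Hp.projectionOntoL Hm hT)) hsectp fun z R hR =>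
      exists_hasResOn_adjoint_orthogonal hT hdense hcp hR
  · exact SectorBound.of_conj (norm_nonneg (Hm.projectionOntoL Hp hT.symm)) hsectm fun z R hR =>
      exists_hasResOn_adjoint_orthogonal hT.symm hdense hcm (z := -z) (by rwa [map_neg])

/-- if `S` is sectorially dichotomous with angle `θ` on a Hilbert space
(with decomposition `H = H₊ ⊕ H₋`), then `S*` is sectorially dichotomous with angle
`θ` with respect to `H = H₋ᗮ ⊕ H₊ᗮ`. -/
theorem adjoint_sectoriallyDichotomous
    {H : Type*} [NormedAddCommGroup H] [InnerProductSpace ℂ H] [CompleteSpace H]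
    (S : H →ₗ.[ℂ] H) (hdense : Dense (S.domain : Set H))
    (hclosed : IsClosed (S.graph : Set (H × H)))
    (θ : ℝ) (hθ0 : 0 ≤ θ) (hθ : θ < Real.pi / 2)
    (h : ℝ) (hh : 0 < h)
    (Hp Hm : Submodule ℂ H) (hHp : IsClosed (Hp : Set H)) (hHm : IsClosed (Hm : Set H))
    (hcompl : IsCompl Hp Hm)
    (hstrip : ∀ z : ℂ, |z.re| < h → ∃ Rz : H →L[ℂ] H, HasRes S z Rz)
    (hinvp : ∀ x : S.domain, (x : H) ∈ Hp → S x ∈ Hp)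
    (hinvm : ∀ x : S.domain, (x : H) ∈ Hm → S x ∈ Hm)
    (hspecp : ∀ z : ℂ, z.re ≤ 0 → ∃ Rz : ↥Hp →L[ℂ] ↥Hp, HasResOn S Hp z Rz)
    (hspecm : ∀ z : ℂ, 0 ≤ z.re → ∃ Rz : ↥Hm →L[ℂ] ↥Hm, HasResOn S Hm z Rz)
    (hsectp : ∀ θ' : ℝ, θ < θ' → θ' ≤ Real.pi → ∃ M > (0 : ℝ), ∀ z : ℂ,
      θ' ≤ |z.arg| → ∃ Rz : ↥Hp →L[ℂ] ↥Hp, HasResOn S Hp z Rz ∧ ‖Rz‖ ≤ M / ‖z‖)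
    (hsectm : ∀ θ' : ℝ, θ < θ' → θ' ≤ Real.pi → ∃ M > (0 : ℝ), ∀ z : ℂ,
      θ' ≤ |z.arg| → ∃ Rz : ↥Hm →L[ℂ] ↥Hm, HasResOn S Hm (-z) Rz ∧ ‖Rz‖ ≤ M / ‖z‖) :
    -- S* is sectorially dichotomous with angle θ w.r.t. H = H₋ᗮ ⊕ H₊ᗮ
    IsCompl Hmᗮ Hpᗮ ∧
    (∃ h' > (0 : ℝ), ∀ z : ℂ, |z.re| < h' →
      ∃ Rz : H →L[ℂ] H, HasRes S.adjoint z Rz) ∧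
    (∀ y : S.adjoint.domain, (y : H) ∈ Hmᗮ → S.adjoint y ∈ Hmᗮ) ∧
    (∀ y : S.adjoint.domain, (y : H) ∈ Hpᗮ → S.adjoint y ∈ Hpᗮ) ∧
    (∀ z : ℂ, z.re ≤ 0 → ∃ Rz : ↥Hmᗮ →L[ℂ] ↥Hmᗮ, HasResOn S.adjoint Hmᗮ z Rz) ∧
    (∀ z : ℂ, 0 ≤ z.re → ∃ Rz : ↥Hpᗮ →L[ℂ] ↥Hpᗮ, HasResOn S.adjoint Hpᗮ z Rz) ∧
    (∀ θ' : ℝ, θ < θ' → θ' ≤ Real.pi → ∃ M > (0 : ℝ), ∀ z : ℂ,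
      θ' ≤ |z.arg| →
        ∃ Rz : ↥Hmᗮ →L[ℂ] ↥Hmᗮ, HasResOn S.adjoint Hmᗮ z Rz ∧ ‖Rz‖ ≤ M / ‖z‖) ∧
    (∀ θ' : ℝ, θ < θ' → θ' ≤ Real.pi → ∃ M > (0 : ℝ), ∀ z : ℂ,
      θ' ≤ |z.arg| →
        ∃ Rz : ↥Hpᗮ →L[ℂ] ↥Hpᗮ, HasResOn S.adjoint Hpᗮ (-z) Rz ∧ ‖Rz‖ ≤ M / ‖z‖) :=
  adjoint_sectoriallyDichotomous_general S hdense θ h hh Hp Hm hHp hHm hcompl hstrip hspecp hspecm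
    hsectp hsectm
end

section
/- Let S be bisectorial with angle θ ∈ [0, π/2) and radius r ≥ 0, and let R be p-subordinate to S with p ∈ [0,1]. Then for every θ' ∈ (θ, π/2] there exists M' ≥ 0 such that ‖R(S − z)⁻¹‖ ≤ M'/|z|^(1−p) for all z with θ' ≤ |arg z| ≤ π − θ' and |z| > r. -/
/-- if `S` is bisectorial with angle `θ` and radius `r`, and `R` is
`p`-subordinate to `S`, then for every `θ' ∈ (θ, π/2]` there is `M' ≥ 0` with
`‖R(S − z)⁻¹‖ ≤ M'/|z|^(1−p)` on the bisector `Ω_{θ',r}`. -/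
theorem psubordinate_resolvent_estimate
    {V : Type*} [NormedAddCommGroup V] [NormedSpace ℂ V]
    (S R : V →ₗ.[ℂ] V) (hdom : S.domain ≤ R.domain)
    (θ : ℝ) (hθ0 : 0 ≤ θ) (hθ : θ < Real.pi / 2) (r : ℝ) (hr : 0 ≤ r)
    -- S is bisectorial with angle θ and radius r
    (hbisect : ∀ θ' : ℝ, θ < θ' → θ' ≤ Real.pi / 2 → ∃ M > (0 : ℝ), ∀ z : ℂ,
      θ' ≤ |z.arg| → |z.arg| ≤ Real.pi - θ' → r < ‖z‖ →
      ∃ Rz : V →L[ℂ] V, HasRes S z Rz ∧ ‖Rz‖ ≤ M / ‖z‖)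
    -- R is p-subordinate to S
    (p : ℝ) (hp0 : 0 ≤ p) (hp1 : p ≤ 1) (c : ℝ) (hc : 0 ≤ c)
    (hsub : ∀ x : S.domain, ‖R ⟨(x : V), hdom x.2⟩‖ ≤ c * ‖(x : V)‖ ^ (1 - p) * ‖S x‖ ^ p) :
    ∀ θ' : ℝ, θ < θ' → θ' ≤ Real.pi / 2 → ∃ M' ≥ (0 : ℝ), ∀ z : ℂ,
      θ' ≤ |z.arg| → |z.arg| ≤ Real.pi - θ' → r < ‖z‖ →
      ∀ Rz : V →L[ℂ] V, HasRes S z Rz →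
      ∀ y : V, ∀ hy : Rz y ∈ R.domain,
        ‖R ⟨Rz y, hy⟩‖ ≤ M' / ‖z‖ ^ (1 - p) * ‖y‖ := by
  intro θ' hθ'1 hθ'2
  obtain ⟨M, hM, hRes⟩ := hbisect θ' hθ'1 hθ'2
  refine ⟨c * M ^ (1 - p) * (1 + M) ^ p, by positivity, ?_⟩
  intro z hz1 hz2 hz3 Rz hRz y hy
  obtain ⟨Rz', ⟨hRz'1, hRz'2⟩, hRz'norm⟩ := hRes z hz1 hz2 hz3
  have hzpos : (0 : ℝ) < ‖z‖ := lt_of_le_of_lt hr hz3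
  obtain ⟨hmem, heq⟩ := hRz.1 y
  have hRzy : Rz y = Rz' y := by
    calc Rz y = Rz' (S ⟨Rz y, hmem⟩ - z • Rz y) := (hRz'2 ⟨Rz y, hmem⟩).symm
    _ = Rz' y := by rw [heq]
  have hnormRzy : ‖Rz y‖ ≤ M / ‖z‖ * ‖y‖ := by
    rw [hRzy]
    calc ‖Rz' y‖ ≤ ‖Rz'‖ * ‖y‖ := Rz'.le_opNorm y
    _ ≤ M / ‖z‖ * ‖y‖ := by gcongr
  have hSx : ‖S ⟨Rz y, hmem⟩‖ ≤ (1 + M) * ‖y‖ := by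
    have hS : S ⟨Rz y, hmem⟩ = y + z • Rz y := eq_add_of_sub_eq heq
    calc ‖S ⟨Rz y, hmem⟩‖ = ‖y + z • Rz y‖ := by rw [hS]
    _ ≤ ‖y‖ + ‖z • Rz y‖ := norm_add_le _ _
    _ = ‖y‖ + ‖z‖ * ‖Rz y‖ := by rw [norm_smul]
    _ ≤ ‖y‖ + ‖z‖ * (M / ‖z‖ * ‖y‖) := by gcongr
    _ = (1 + M) * ‖y‖ := by
        rw [show ‖z‖ * (M / ‖z‖ * ‖y‖) = ‖z‖ / ‖z‖ * (M * ‖y‖) by ring,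
          div_self hzpos.ne', one_mul]
        ring
  have hy0 : (0 : ℝ) ≤ ‖y‖ := norm_nonneg y
  calc ‖R ⟨Rz y, hy⟩‖
      ≤ c * ‖Rz y‖ ^ (1 - p) * ‖S ⟨Rz y, hmem⟩‖ ^ p := hsub ⟨Rz y, hmem⟩
    _ ≤ c * (M / ‖z‖ * ‖y‖) ^ (1 - p) * ((1 + M) * ‖y‖) ^ p := by
        have h1 := Real.rpow_le_rpow (norm_nonneg (Rz y)) hnormRzy (by linarith : (0:ℝ) ≤ 1 - p)
        have h2 := Real.rpow_le_rpow (norm_nonneg _) hSx hp0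
        exact mul_le_mul (mul_le_mul le_rfl h1 (Real.rpow_nonneg (norm_nonneg _) _) hc) h2
          (Real.rpow_nonneg (norm_nonneg _) _) (by positivity)
    _ = c * M ^ (1 - p) * (1 + M) ^ p / ‖z‖ ^ (1 - p) * ‖y‖ := by
        rw [Real.mul_rpow (by positivity) hy0, Real.mul_rpow (by positivity) hy0,
          Real.div_rpow hM.le hzpos.le]
        have hyy : ‖y‖ ^ (1 - p) * ‖y‖ ^ p = ‖y‖ := by
          rw [← Real.rpow_add' hy0 (by norm_num)]
          simp
        calc c * (M ^ (1 - p) / ‖z‖ ^ (1 - p) * ‖y‖ ^ (1 - p)) * ((1 + M) ^ p * ‖y‖ ^ p)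
            = c * M ^ (1 - p) * (1 + M) ^ p / ‖z‖ ^ (1 - p) * (‖y‖ ^ (1 - p) * ‖y‖ ^ p) := by
              ring
          _ = c * M ^ (1 - p) * (1 + M) ^ p / ‖z‖ ^ (1 - p) * ‖y‖ := by rw [hyy]
end

section
/- Let S be bisectorial with angle θ and radius r, D(S) ⊆ D(R). If there exist θ' ∈ (θ, π/2] and M' ≥ 0 such that ‖R(S − z)⁻¹‖ ≤ M'/|z|^(1−p) for all z ≠ 0 with θ' ≤ |arg z| ≤ π − θ', then R is p-subordinate to S. -/
/-!
Resolving `x ∈ D(S)` at `z = t i` gives `x = (S - z)⁻¹ (S x - z x)`, so the resolvent bound yields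
`‖R x‖ ≤ M' t^(p-1) (‖S x‖ + t ‖x‖)` for every `t > 0`. Balancing the two terms with
`t = ‖S x‖ / ‖x‖` gives `‖R x‖ ≤ 2 M' ‖x‖^(1-p) ‖S x‖^p`; when `S x = 0` one lets `t → 0` instead.
-/

open Filter Topology

lemma nonpos_of_forall_pos_le_mul_rpow {u C p : ℝ} (hp : 0 < p)
    (h : ∀ t > 0, u ≤ C * t ^ p) : u ≤ 0 := by
  have hlim : Tendsto (fun t : ℝ => C * t ^ p) (𝓝[>] 0) (𝓝 0) := by
    have := ((Real.continuousAt_rpow_const 0 p (Or.inr hp.le)).const_mul C).tendsto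
    rw [Real.zero_rpow hp.ne', mul_zero] at this
    exact this.mono_left nhdsWithin_le_nhds
  exact ge_of_tendsto hlim (eventually_nhdsWithin_of_forall h)

lemma le_two_mul_rpow_mul_rpow_of_forall_le {u a b M p : ℝ} (hp : 0 ≤ p) (ha : 0 < a)
    (hb : 0 ≤ b) (hM : 0 ≤ M) (h : ∀ t > 0, u ≤ M / t ^ (1 - p) * (b + t * a)) :
    u ≤ 2 * M * a ^ (1 - p) * b ^ p := by
  rcases hb.eq_or_lt with rfl | hb
  · rcases hp.eq_or_lt with rfl | hp
    · have := h 1 one_pos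
      simp only [sub_zero, Real.rpow_one, Real.rpow_zero, div_one, zero_add, one_mul,
        mul_one] at this ⊢
      linarith [mul_nonneg hM ha.le]
    · rw [Real.zero_rpow hp.ne', mul_zero]
      refine nonpos_of_forall_pos_le_mul_rpow (C := M * a) hp fun t ht => (h t ht).trans_eq ?_
      rw [Real.rpow_sub ht, Real.rpow_one]
      field_simp [(Real.rpow_pos_of_pos ht p).ne']
      ring
  · refine (h (b / a) (by positivity)).trans_eq ?_
    have hb_split : b ^ (1 - p) * b ^ p = b := by
      rw [← Real.rpow_add hb, sub_add_cancel, Real.rpow_one]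
    rw [Real.div_rpow hb.le ha.le, div_mul_cancel₀ b ha.ne']
    field_simp [(Real.rpow_pos_of_pos ha (1 - p)).ne', (Real.rpow_pos_of_pos hb (1 - p)).ne']
    linear_combination (-2 : ℝ) * M * hb_split

lemma HasRes.norm_apply_le {V : Type*} [NormedAddCommGroup V] [NormedSpace ℂ V]
    {S R : V →ₗ.[ℂ] V} {z : ℂ} {Rz : V →L[ℂ] V} (hRz : HasRes S z Rz) {K : ℝ}
    (hbound : ∀ y : V, ∀ hy : Rz y ∈ R.domain, ‖R ⟨Rz y, hy⟩‖ ≤ K * ‖y‖)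
    (x : S.domain) (hx : (x : V) ∈ R.domain) :
    ‖R ⟨x, hx⟩‖ ≤ K * ‖S x - z • (x : V)‖ := by
  have hy : Rz (S x - z • (x : V)) ∈ R.domain := (hRz.2 x).symm ▸ hx
  convert hbound _ hy using 4
  exact (hRz.2 x).symm

lemma Complex.norm_ofReal_mul_I {t : ℝ} (ht : 0 ≤ t) : ‖(t : ℂ) * Complex.I‖ = t := by
  simp [abs_of_nonneg ht]

lemma Complex.arg_ofReal_mul_I {t : ℝ} (ht : 0 < t) :
    ((t : ℂ) * Complex.I).arg = Real.pi / 2 := by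
  rw [Complex.arg_real_mul _ ht, Complex.arg_I]

theorem resolvent_estimate_psubordinate_general
    {V : Type*} [NormedAddCommGroup V] [NormedSpace ℂ V]
    (S R : V →ₗ.[ℂ] V) (hdom : S.domain ≤ R.domain)
    (p : ℝ) (hp0 : 0 ≤ p)
    (θ' : ℝ) (hθ'2 : θ' ≤ Real.pi / 2)
    (M' : ℝ) (hM' : 0 ≤ M')
    (hest : ∀ z : ℂ, z ≠ 0 → θ' ≤ |z.arg| → |z.arg| ≤ Real.pi - θ' →
      ∃ Rz : V →L[ℂ] V, HasRes S z Rz ∧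
        ∀ y : V, ∀ hy : Rz y ∈ R.domain,
          ‖R ⟨Rz y, hy⟩‖ ≤ M' / ‖z‖ ^ (1 - p) * ‖y‖) :
    ∃ c ≥ (0 : ℝ), ∀ x : S.domain,
      ‖R ⟨(x : V), hdom x.2⟩‖ ≤ c * ‖(x : V)‖ ^ (1 - p) * ‖S x‖ ^ p := by
  refine ⟨2 * M', by positivity, fun x => ?_⟩
  have on_imaginary_axis : ∀ t > 0,
      ‖R ⟨(x : V), hdom x.2⟩‖ ≤ M' / t ^ (1 - p) * (‖S x‖ + t * ‖(x : V)‖) := by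
    intro t ht
    have hnorm := Complex.norm_ofReal_mul_I ht.le
    have harg : |((t : ℂ) * Complex.I).arg| = Real.pi / 2 := by
      rw [Complex.arg_ofReal_mul_I ht, abs_of_pos Real.pi_div_two_pos]
    obtain ⟨Rz, hRz, hbound⟩ := hest _ (norm_pos_iff.1 (hnorm ▸ ht)) (harg ▸ hθ'2)
      (by rw [harg]; linarith)
    calc ‖R ⟨(x : V), hdom x.2⟩‖
        ≤ M' / t ^ (1 - p) * ‖S x - ((t : ℂ) * Complex.I) • (x : V)‖ := by
          simpa only [hnorm] using hRz.norm_apply_le hbound x (hdom x.2)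
      _ ≤ M' / t ^ (1 - p) * (‖S x‖ + t * ‖(x : V)‖) := by
          gcongr
          exact (norm_sub_le _ _).trans_eq (by rw [norm_smul, hnorm])
  rcases eq_or_ne (x : V) 0 with hx | hx
  · have : (⟨(x : V), hdom x.2⟩ : R.domain) = 0 := Subtype.ext hx
    rw [this, R.map_zero, norm_zero]
    positivity
  · exact le_two_mul_rpow_mul_rpow_of_forall_le hp0 (norm_pos_iff.2 hx) (norm_nonneg _) hM'
      on_imaginary_axis

/-- if `S` is bisectorial with angle `θ` and radius `r`, `D(S) ⊆ D(R)`,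
and there are `θ' ∈ (θ, π/2]` and `M' ≥ 0` such that for all `z ≠ 0` with
`θ' ≤ |arg z| ≤ π − θ'` one has `‖R(S − z)⁻¹‖ ≤ M'/|z|^(1−p)`, then `R` is
`p`-subordinate to `S`. -/
theorem resolvent_estimate_psubordinate
    {V : Type*} [NormedAddCommGroup V] [NormedSpace ℂ V]
    (S R : V →ₗ.[ℂ] V) (hdom : S.domain ≤ R.domain)
    (θ : ℝ) (hθ0 : 0 ≤ θ) (hθ : θ < Real.pi / 2) (r : ℝ) (hr : 0 ≤ r)
    (hbisect : ∀ θ'' : ℝ, θ < θ'' → θ'' ≤ Real.pi / 2 → ∃ M > (0 : ℝ), ∀ z : ℂ,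
      θ'' ≤ |z.arg| → |z.arg| ≤ Real.pi - θ'' → r < ‖z‖ →
      ∃ Rz : V →L[ℂ] V, HasRes S z Rz ∧ ‖Rz‖ ≤ M / ‖z‖)
    (p : ℝ) (hp0 : 0 ≤ p) (hp1 : p ≤ 1)
    (θ' : ℝ) (hθ' : θ < θ') (hθ'2 : θ' ≤ Real.pi / 2)
    (M' : ℝ) (hM' : 0 ≤ M')
    (hest : ∀ z : ℂ, z ≠ 0 → θ' ≤ |z.arg| → |z.arg| ≤ Real.pi - θ' →
      ∃ Rz : V →L[ℂ] V, HasRes S z Rz ∧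
        ∀ y : V, ∀ hy : Rz y ∈ R.domain,
          ‖R ⟨Rz y, hy⟩‖ ≤ M' / ‖z‖ ^ (1 - p) * ‖y‖) :
    ∃ c ≥ (0 : ℝ), ∀ x : S.domain,
      ‖R ⟨(x : V), hdom x.2⟩‖ ≤ c * ‖(x : V)‖ ^ (1 - p) * ‖S x‖ ^ p :=
  resolvent_estimate_psubordinate_general S R hdom p hp0 θ' hθ'2 M' hM' hest
end

section
/- If V₊ is a J-neutral subspace of a Krein space V (⟨x,x⟩ = 0 for all x ∈ V₊) and V = V₊ ⊕ V₋ with V₋ also J-neutral, then V₊ equals its J-orthogonal complement, i.e. V₊ is hypermaximal J-neutral: x ∈ V with ⟨x,y⟩ = 0 for all y ∈ V₊ implies x ∈ V₊. -/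
/-!
Polarization upgrades `J`-neutrality of a subspace `U` to `J U ⊥ U`. Write an `x` that is
`J`-orthogonal to `V₊` as `x = p + m` with `p ∈ V₊`, `m ∈ V₋`. Then `J m` is orthogonal to `V₊`
(because `J x` and `J p` are) and to `V₋` (by neutrality of `V₋`), hence to `V₊ ⊔ V₋ = V`,
so `J m = 0` and `m = 0` since `J` is injective.
-/

open Submodule

section

variable {V : Type*} [NormedAddCommGroup V] [InnerProductSpace ℂ V]

theorem Submodule.map_le_orthogonal_of_inner_map_self_eq_zero (T : V →ₗ[ℂ] V)
    (U : Submodule ℂ V) (hU : ∀ x ∈ U, inner ℂ (T x) x = 0) : U.map T ≤ Uᗮ := by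
  rintro _ ⟨x, hx, rfl⟩
  refine (mem_orthogonal' _ _).2 fun y hy => ?_
  rw [inner_map_polarization', hU _ (U.add_mem hx hy), hU _ (U.sub_mem hx hy),
    hU _ (U.add_mem hx (U.smul_mem _ hy)), hU _ (U.sub_mem hx (U.smul_mem _ hy))]
  ring

theorem Submodule.comap_orthogonal_eq_self_of_isCompl (T : V →ₗ[ℂ] V) (hT : Function.Injective T)
    {U W : Submodule ℂ V} (hUW : IsCompl U W) (hU : ∀ x ∈ U, inner ℂ (T x) x = 0)
    (hW : ∀ x ∈ W, inner ℂ (T x) x = 0) : Uᗮ.comap T = U := by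
  have hTU : U ≤ Uᗮ.comap T :=
    map_le_iff_le_comap.1 (U.map_le_orthogonal_of_inner_map_self_eq_zero T hU)
  refine le_antisymm (fun x hx => ?_) hTU
  obtain ⟨p, hp, m, hm, rfl⟩ := mem_sup.1 (hUW.sup_eq_top ▸ mem_top : x ∈ U ⊔ W)
  have hTmU : T m ∈ Uᗮ := by
    simpa only [map_add, add_sub_cancel_left] using sub_mem (mem_comap.1 hx) (hTU hp)
  have hTmW : T m ∈ Wᗮ := W.map_le_orthogonal_of_inner_map_self_eq_zero T hW (mem_map_of_mem hm)
  have hTm : T m ∈ (U ⊔ W)ᗮ := inf_orthogonal U W ▸ mem_inf.2 ⟨hTmU, hTmW⟩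
  rw [hUW.sup_eq_top, top_orthogonal_eq_bot, mem_bot] at hTm
  rw [hT (hTm.trans (map_zero T).symm), add_zero]
  exact hp

end

theorem neutral_complement_hypermaximal_general
    {V : Type*} [NormedAddCommGroup V] [InnerProductSpace ℂ V]
    (J : V →L[ℂ] V)
    (hJinv : ∀ x : V, J (J x) = x)
    (Vp Vm : Submodule ℂ V)
    (hcompl : IsCompl Vp Vm)
    (hneutp : ∀ x ∈ Vp, (inner ℂ (J x) x : ℂ) = 0)
    (hneutm : ∀ x ∈ Vm, (inner ℂ (J x) x : ℂ) = 0) :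
    {x : V | ∀ y ∈ Vp, (inner ℂ (J x) y : ℂ) = 0} = (Vp : Set V) := by
  have hJ : Function.Injective J := Function.LeftInverse.injective hJinv
  have hJ_orth : {x : V | ∀ y ∈ Vp, (inner ℂ (J x) y : ℂ) = 0} = Vpᗮ.comap (J : V →ₗ[ℂ] V) := by
    ext x
    exact (mem_orthogonal' _ _).symm
  rw [hJ_orth, comap_orthogonal_eq_self_of_isCompl (J : V →ₗ[ℂ] V) hJ hcompl hneutp hneutm]

/-- if `V = V₊ ⊕ V₋` with both `V₊` and `V₋` `J`-neutral subspaces of a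
Krein space `(V, ⟨x,y⟩ = (Jx|y))`, then `V₊` equals its `J`-orthogonal complement,
i.e. `V₊` is hypermaximal `J`-neutral. -/
theorem neutral_complement_hypermaximal
    {V : Type*} [NormedAddCommGroup V] [InnerProductSpace ℂ V] [CompleteSpace V]
    (J : V →L[ℂ] V)
    (hJinv : ∀ x : V, J (J x) = x)
    (hJsa : ∀ x y : V, (inner ℂ (J x) y : ℂ) = inner ℂ x (J y))
    (Vp Vm : Submodule ℂ V) (hVp : IsClosed (Vp : Set V)) (hVm : IsClosed (Vm : Set V))
    (hcompl : IsCompl Vp Vm)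
    (hneutp : ∀ x ∈ Vp, (inner ℂ (J x) x : ℂ) = 0)
    (hneutm : ∀ x ∈ Vm, (inner ℂ (J x) x : ℂ) = 0) :
    {x : V | ∀ y ∈ Vp, (inner ℂ (J x) y : ℂ) = 0} = (Vp : Set V) :=
  neutral_complement_hypermaximal_general J hJinv Vp Vm hcompl hneutp hneutm
end

section
/- For r ∈ [0,1] let X_r be linear operators on a Hilbert space H and P_r projections on H × H with range G(X_r). Suppose (i) r ↦ P_r is continuous in operator norm, (ii) X₀ is bounded, and (iii) there exists L > 0 such that whenever X_r is bounded, ‖X_r‖ ≤ L. Then X_r is bounded for every r ∈ [0,1]. -/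
/-!
If `‖P_r - P_s‖ < ε` with `(L + 1) ε ≤ 1/2` and `X_s` is bounded, hence `L`-bounded, then every
graph point `z = (u, X_r u) = P_r z` lies within `ε ‖z‖` of `P_s z = (v, X_s v)`, and comparing
the two components gives `‖X_r u‖ ≤ (2L + 1) ‖u‖`. So boundedness of `X_r` is locally constant
in `r` along the connected interval `[0, 1]`, and it holds at `r = 0`.
-/

theorem isLocallyConstant_of_dist_lt {X M : Type*} [TopologicalSpace X] [PseudoMetricSpace M]
    {f : X → M} (hf : Continuous f) {p : X → Prop} {ε : ℝ} (hε : 0 < ε)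
    (h : ∀ x y, dist (f x) (f y) < ε → (p x ↔ p y)) : IsLocallyConstant p := by
  refine (IsLocallyConstant.iff_eventually_eq p).2 fun x => ?_
  filter_upwards [(hf.tendsto x).eventually (Metric.ball_mem_nhds (f x) hε)] with y hy
  exact propext (h y x hy)

namespace LinearPMap

section Graph

variable {R E F : Type*} [Ring R] [SeminormedAddCommGroup E] [SeminormedAddCommGroup F]
  [Module R E] [Module R F]

def IsBoundedBy (X : E →ₗ.[R] F) (K : ℝ) : Prop :=
  ∀ u : X.domain, ‖X u‖ ≤ K * ‖(u : E)‖

theorem isBoundedBy_of_graph_near {X Y : E →ₗ.[R] F} {L ε : ℝ} (hL : 0 ≤ L)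
    (hε : (L + 1) * ε ≤ 1 / 2) (hY : Y.IsBoundedBy L)
    (hnear : ∀ u : X.domain, ∃ v : Y.domain,
      ‖((u : E), X u) - ((v : E), Y v)‖ ≤ ε * ‖((u : E), X u)‖) :
    X.IsBoundedBy (2 * L + 1) := by
  intro u
  obtain ⟨v, hv⟩ := hnear u
  set z : E × F := ((u : E), X u)
  have hdom : ‖(u : E) - v‖ ≤ ε * ‖z‖ := (norm_fst_le _).trans hv
  have hval : ‖X u - Y v‖ ≤ ε * ‖z‖ := (norm_snd_le _).trans hv
  have hz : ‖z‖ ≤ ‖(u : E)‖ + ‖X u‖ :=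
    max_le (le_add_of_nonneg_right (norm_nonneg _)) (le_add_of_nonneg_left (norm_nonneg _))
  have hsmall : (L + 1) * (ε * ‖z‖) ≤ (‖(u : E)‖ + ‖X u‖) / 2 :=
    calc (L + 1) * (ε * ‖z‖) = ((L + 1) * ε) * ‖z‖ := by ring
      _ ≤ 1 / 2 * ‖z‖ := mul_le_mul_of_nonneg_right hε (norm_nonneg z)
      _ ≤ (‖(u : E)‖ + ‖X u‖) / 2 := by linarith
  have hv_le : L * ‖(v : E)‖ ≤ L * (‖(u : E)‖ + ε * ‖z‖) :=
    mul_le_mul_of_nonneg_left ((norm_le_norm_add_norm_sub _ _).trans (by gcongr)) hL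
  linarith [norm_le_norm_add_norm_sub' (X u) (Y v), hY v]

end Graph

section Projection

variable {𝕜 E F : Type*} [NontriviallyNormedField 𝕜] [SeminormedAddCommGroup E]
  [SeminormedAddCommGroup F] [NormedSpace 𝕜 E] [NormedSpace 𝕜 F]

theorem isBoundedBy_of_norm_sub_le {X Y : E →ₗ.[𝕜] F} {P Q : E × F →L[𝕜] E × F} {L ε : ℝ}
    (hP : ∀ z ∈ X.graph, P z = z) (hQ : ∀ z, Q z ∈ Y.graph) (hPQ : ‖P - Q‖ ≤ ε) (hL : 0 ≤ L)
    (hε : (L + 1) * ε ≤ 1 / 2) (hY : Y.IsBoundedBy L) : X.IsBoundedBy (2 * L + 1) := by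
  refine isBoundedBy_of_graph_near hL hε hY fun u => ?_
  set z : E × F := ((u : E), X u)
  obtain ⟨v, hv⟩ := (Y.mem_graph_iff' (x := Q z)).1 (hQ z)
  refine ⟨v, ?_⟩
  calc ‖z - ((v : E), Y v)‖ = ‖(P - Q) z‖ := by
        rw [hv, _root_.sub_apply, hP z (X.mem_graph u)]
    _ ≤ ‖P - Q‖ * ‖z‖ := (P - Q).le_opNorm z
    _ ≤ ε * ‖z‖ := mul_le_mul_of_nonneg_right hPQ (norm_nonneg z)

end Projection

end LinearPMap

theorem graph_continuity_boundedness_general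
    {H : Type*} [NormedAddCommGroup H] [InnerProductSpace ℂ H]
    (X : ℝ → (H →ₗ.[ℂ] H))
    (P : ℝ → ((H × H) →L[ℂ] (H × H)))
    (hproj : ∀ r ∈ Set.Icc (0 : ℝ) 1, ∀ z : H × H, P r (P r z) = P r z)
    (hrange : ∀ r ∈ Set.Icc (0 : ℝ) 1,
      Set.range (P r) = {z : H × H | ∃ u : (X r).domain, z = ((u : H), X r u)})
    (hcont : ContinuousOn P (Set.Icc (0 : ℝ) 1))
    (hX0 : ∃ K : ℝ, ∀ u : (X 0).domain, ‖X 0 u‖ ≤ K * ‖(u : H)‖)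
    (L : ℝ) (hL : 0 < L)
    (hunif : ∀ r ∈ Set.Icc (0 : ℝ) 1,
      (∃ K : ℝ, ∀ u : (X r).domain, ‖X r u‖ ≤ K * ‖(u : H)‖) →
      ∀ u : (X r).domain, ‖X r u‖ ≤ L * ‖(u : H)‖) :
    ∀ r ∈ Set.Icc (0 : ℝ) 1, ∃ K : ℝ, ∀ u : (X r).domain, ‖X r u‖ ≤ K * ‖(u : H)‖ := by
  set I := Set.Icc (0 : ℝ) 1
  have hgraph : ∀ r ∈ I, Set.range (P r) = (X r).graph := by
    intro r hr
    ext z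
    rw [hrange r hr, SetLike.mem_coe, LinearPMap.mem_graph_iff']
    exact exists_congr fun u => eq_comm
  have hfix : ∀ r ∈ I, ∀ z ∈ (X r).graph, P r z = z := by
    intro r hr z hz
    obtain ⟨w, rfl⟩ : z ∈ Set.range (P r) := hgraph r hr ▸ hz
    exact hproj r hr w
  set ε : ℝ := (2 * (L + 1))⁻¹
  have hε : (L + 1) * ε ≤ 1 / 2 := le_of_eq (by simp only [ε]; field_simp)
  have hbounded_of_near : ∀ r s : I, dist (P r) (P s) < ε →
      (∃ K, (X s).IsBoundedBy K) → ∃ K, (X r).IsBoundedBy K := fun r s hrs hs =>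
    ⟨2 * L + 1, LinearPMap.isBoundedBy_of_norm_sub_le (hfix r r.2)
      (fun z => hgraph s s.2 ▸ Set.mem_range_self z) (dist_eq_norm (P r) (P s) ▸ hrs.le) hL.le hε
      (hunif s s.2 hs)⟩
  have hconst : IsLocallyConstant fun r : I => ∃ K, (X r).IsBoundedBy K :=
    isLocallyConstant_of_dist_lt hcont.domRestrict (by positivity) fun r s hrs =>
      ⟨hbounded_of_near s r (dist_comm (P r) (P s) ▸ hrs), hbounded_of_near r s hrs⟩
  have : PreconnectedSpace I := Subtype.preconnectedSpace isPreconnected_Icc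
  intro r hr
  exact hconst.apply_eq_of_preconnectedSpace ⟨0, by simp [I]⟩ ⟨r, hr⟩ ▸ hX0

/-- if `P_r` are projections on `H × H` with range `G(X_r)`, `r ↦ P_r`
is operator-norm continuous on `[0,1]`, `X₀` is bounded, and there is a uniform bound
`L` for the norms of all bounded `X_r`, then every `X_r`, `r ∈ [0,1]`, is bounded. -/
theorem graph_continuity_boundedness
    {H : Type*} [NormedAddCommGroup H] [InnerProductSpace ℂ H] [CompleteSpace H]
    (X : ℝ → (H →ₗ.[ℂ] H))
    (P : ℝ → ((H × H) →L[ℂ] (H × H)))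
    (hproj : ∀ r ∈ Set.Icc (0 : ℝ) 1, ∀ z : H × H, P r (P r z) = P r z)
    (hrange : ∀ r ∈ Set.Icc (0 : ℝ) 1,
      Set.range (P r) = {z : H × H | ∃ u : (X r).domain, z = ((u : H), X r u)})
    (hcont : ContinuousOn P (Set.Icc (0 : ℝ) 1))
    (hX0 : ∃ K : ℝ, ∀ u : (X 0).domain, ‖X 0 u‖ ≤ K * ‖(u : H)‖)
    (L : ℝ) (hL : 0 < L)
    (hunif : ∀ r ∈ Set.Icc (0 : ℝ) 1,
      (∃ K : ℝ, ∀ u : (X r).domain, ‖X r u‖ ≤ K * ‖(u : H)‖) →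
      ∀ u : (X r).domain, ‖X r u‖ ≤ L * ‖(u : H)‖) :
    ∀ r ∈ Set.Icc (0 : ℝ) 1, ∃ K : ℝ, ∀ u : (X r).domain, ‖X r u‖ ≤ K * ‖(u : H)‖ :=
  graph_continuity_boundedness_general X P hproj hrange hcont hX0 L hL hunif
end
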